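/- (Iterated limit property) Let f ∈ R(x). Then for all sufficiently small ε > 0 and any u ∈ ℝ^n: lc(lc(f)(p^u x)) = lc(f(p^{εu} x)) and val(f) + ε·val(lc(f)(p^u x)) = val(f(p^{εu} x)). -/

import Mathlib

noncomputable section
open Classical

/-- Multivariate polynomials in `n` variables over `ℂ`. -/
abbrev MvP (n : ℕ) := MvPolynomial (Fin n) ℂ

/-- The field of rational functions in `n` variables over `ℂ`. -/
abbrev KK (n : ℕ) := FractionRing (MvP n)

/-- The minimal `ε`-weight `min_{m ∈ supp f} ∑ i, ε i * m i` of a multivariate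
polynomial: the `p`-adic valuation of `f(p^{ε₁}x₁, …, p^{εₙ}xₙ)`. -/
def mvValEps (n : ℕ) (ε : Fin n → ℝ) (f : MvP n) : ℝ :=
  if h : f.support.Nonempty then f.support.inf' h (fun m => ∑ i, ε i * (m i : ℝ)) else 0

/-- `deg_ε(r)` for a rational function `r`: the `p`-adic valuation of
`r(p^{ε₁}x₁, …, p^{εₙ}xₙ)`, computed from a fraction representation of `r`. -/
def degEps (n : ℕ) (ε : Fin n → ℝ) (r : KK n) : ℝ :=
  mvValEps n ε (IsLocalization.sec (nonZeroDivisors (MvP n)) r).1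
  - mvValEps n ε ((IsLocalization.sec (nonZeroDivisors (MvP n)) r).2 : MvP n)

/-- The degree `deg(r) = -inf_{ε ≠ 0} deg_ε(r)/‖ε‖` of a rational function, with
`‖·‖` the supremum norm on `Fin n → ℝ`. -/
def degK (n : ℕ) (r : KK n) : ℝ :=
  -sInf {d : ℝ | ∃ ε : Fin n → ℝ, ε ≠ 0 ∧ d = degEps n ε r / ‖ε‖}

/-- Membership in `F(x)`: a Hahn series over `ℝ` with rational-function coefficients
whose exponent set is discrete and bounded below, i.e. only finitely many exponents lie
below any given real number. -/
def FiniteBelow (n : ℕ) (f : HahnSeries ℝ (KK n)) : Prop :=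
  ∀ r : ℝ, {t ∈ f.support | t ≤ r}.Finite

/-- Membership in `R(x) ⊂ F(x)`: the coefficients satisfy the degree-growth bound
`deg(a_t) ≤ C (t - val f)` for all exponents `t > val f`, for some constant `C`. -/
def InR (n : ℕ) (f : HahnSeries ℝ (KK n)) : Prop :=
  FiniteBelow n f ∧
    ∃ C : ℝ, ∀ t ∈ f.support, t ≠ f.order → degK n (f.coeff t) ≤ C * (t - f.order)

/-- The substitution `f(p^{ε₁}x₁, …, p^{εₙ}xₙ)` of a polynomial `f`, as a Hahn series
in `p` with rational-function coefficients. -/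
def polySubst (n : ℕ) (ε : Fin n → ℝ) (f : MvP n) : HahnSeries ℝ (KK n) :=
  ∑ m ∈ f.support, HahnSeries.single (∑ i, ε i * (m i : ℝ))
    (algebraMap (MvP n) (KK n) (MvPolynomial.monomial m (MvPolynomial.coeff m f)))

/-- The substitution `r(p^{ε₁}x₁, …, p^{εₙ}xₙ)` of a rational function `r`, as an
element of the field of Hahn series in `p` with rational-function coefficients. -/
def ratSubst (n : ℕ) (ε : Fin n → ℝ) (r : KK n) : HahnSeries ℝ (KK n) :=
  polySubst n ε (IsLocalization.sec (nonZeroDivisors (MvP n)) r).1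
  / polySubst n ε ((IsLocalization.sec (nonZeroDivisors (MvP n)) r).2 : MvP n)

/-- The substitution `f(p^{ε₁}x₁, …, p^{εₙ}xₙ)` of a series `f = ∑_t a_t p^t`: the
series `∑_t a_t(p^ε x) p^t` re-expanded in `p`, characterized coefficientwise by
`coeff s = ∑_t (a_t(p^ε x)).coeff (s - t)`; junk value `0` when no such Hahn series
exists. -/
def serSubst (n : ℕ) (ε : Fin n → ℝ) (f : HahnSeries ℝ (KK n)) : HahnSeries ℝ (KK n) :=
  if h : ∃ g : HahnSeries ℝ (KK n),
      ∀ s : ℝ, g.coeff s = ∑ᶠ t : ℝ, (ratSubst n ε (f.coeff t)).coeff (s - t)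
  then h.choose else 0

/-!
Write `f = ∑ a_t p^t` with `v = val f` and `d_t = val(a_t(p^u x))`. Substituting
`x ↦ p^{εu} x` only rescales the exponents of `a_t(p^u x)` by `ε`, so the term `a_t p^t`
becomes a series of order `t + ε d_t` with the same leading coefficient. The degree bound gives
`d_t ≥ -‖u‖ C (t - v)`, and the exponents of `f` are discrete, so `t - v` stays above a gap
`δ > 0` for `t ≠ v`. Hence for small `ε` the term `t = v` has strictly smaller order than every
other term, and only finitely many terms have order below any given bound: the substituted series
is a well-defined sum whose order and leading coefficient are those of its `t = v` term.
-/

namespace HahnSeries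

theorem order_eq_of_coeff_ne_zero {Γ R : Type*} [LinearOrder Γ] [Zero Γ] [Zero R]
    {x : HahnSeries Γ R} {g : Γ} (hg : x.coeff g ≠ 0) (hlt : ∀ g' < g, x.coeff g' = 0) :
    x.order = g :=
  le_antisymm (order_le_of_coeff_ne_zero hg)
    ((le_order_iff_forall (ne_zero_of_coeff_ne_zero hg)).2 hlt)

theorem order_div {Γ R : Type*} [AddCommGroup Γ] [LinearOrder Γ] [IsOrderedAddMonoid Γ]
    [Field R] {x y : HahnSeries Γ R} (hx : x ≠ 0) (hy : y ≠ 0) :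
    (x / y).order = x.order - y.order := by
  rw [eq_sub_iff_add_eq, ← order_mul (div_ne_zero hx hy) hy, div_mul_cancel₀ x hy]

section ScaleDomain

variable {R : Type*} [NonAssocSemiring R] {c : ℝ}

/-- The substitution `p ↦ p ^ c`. -/
def scaleDomain (hc : 0 < c) : HahnSeries ℝ R →+* HahnSeries ℝ R :=
  embDomainRingHom (AddMonoidHom.mulLeft c) (mul_right_injective₀ hc.ne')
    (fun _ _ => mul_le_mul_iff_right₀ hc)

theorem coeff_scaleDomain (hc : 0 < c) (x : HahnSeries ℝ R) (s : ℝ) :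
    (scaleDomain hc x).coeff s = x.coeff (s / c) := by
  conv_lhs => rw [← mul_div_cancel₀ s hc.ne']
  exact embDomain_coeff

theorem scaleDomain_single (hc : 0 < c) (s : ℝ) (r : R) :
    scaleDomain hc (single s r) = single (c * s) r :=
  embDomain_single

theorem order_scaleDomain (hc : 0 < c) (x : HahnSeries ℝ R) :
    (scaleDomain hc x).order = c * x.order := by
  rcases eq_or_ne x 0 with rfl | hx
  · simp
  refine order_eq_of_coeff_ne_zero ?_ fun s hs => ?_
  · rw [coeff_scaleDomain, mul_div_cancel_left₀ _ hc.ne']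
    exact mt coeff_order_eq_zero.1 hx
  · rw [coeff_scaleDomain]
    exact coeff_eq_zero_of_lt_order ((div_lt_iff₀' hc).2 hs)

theorem leadingCoeff_scaleDomain (hc : 0 < c) (x : HahnSeries ℝ R) :
    (scaleDomain hc x).leadingCoeff = x.leadingCoeff := by
  rw [leadingCoeff_eq, leadingCoeff_eq, order_scaleDomain, coeff_scaleDomain,
    mul_div_cancel_left₀ _ hc.ne']

end ScaleDomain

section Summable

variable {Γ R ι : Type*} [LinearOrder Γ] [Zero Γ] [AddCommMonoid R]

theorem isPWO_iUnion_support_of_finite_order_le {F : ι → HahnSeries Γ R}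
    (hF : ∀ g, {i | F i ≠ 0 ∧ (F i).order ≤ g}.Finite) : (⋃ i, (F i).support).IsPWO := by
  rw [Set.isPWO_iff_isWF, Set.isWF_iff_no_descending_seq]
  intro g hg hmem
  have hWF : (⋃ i ∈ (hF (g 0)).toFinset, (F i).support).IsWF :=
    (Finset.isWF_bUnion _).2 fun i _ => (F i).isWF_support
  refine Set.isWF_iff_no_descending_seq.1 hWF g hg fun k => ?_
  obtain ⟨i, hi⟩ := Set.mem_iUnion.1 (hmem k)
  refine Set.mem_biUnion ((Set.Finite.mem_toFinset _).2 ⟨ne_zero_of_coeff_ne_zero hi, ?_⟩) hi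
  exact (order_le_of_coeff_ne_zero hi).trans (hg.antitone k.zero_le)

namespace SummableFamily

def ofFiniteOrderLE (F : ι → HahnSeries Γ R)
    (hF : ∀ g, {i | F i ≠ 0 ∧ (F i).order ≤ g}.Finite) : SummableFamily Γ R ι where
  toFun := F
  isPWO_iUnion_support' := isPWO_iUnion_support_of_finite_order_le hF
  finite_co_support' g := (hF g).subset fun _ hi =>
    ⟨ne_zero_of_coeff_ne_zero hi, order_le_of_coeff_ne_zero hi⟩

@[simp]
theorem ofFiniteOrderLE_apply (F : ι → HahnSeries Γ R)
    (hF : ∀ g, {i | F i ≠ 0 ∧ (F i).order ≤ g}.Finite) (i : ι) :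
    ofFiniteOrderLE F hF i = F i :=
  rfl

variable (s : SummableFamily Γ R ι) {i₀ : ι}

theorem coeff_hsum_of_le_order (hdom : ∀ i ≠ i₀, s i ≠ 0 → (s i₀).order < (s i).order)
    {g : Γ} (hg : g ≤ (s i₀).order) :
    s.hsum.coeff g = (s i₀).coeff g := by
  rw [coeff_hsum, finsum_eq_single _ i₀ fun i hi => ?_]
  by_cases h : s i = 0
  · simp [h]
  · exact coeff_eq_zero_of_lt_order (hg.trans_lt (hdom i hi h))

theorem order_hsum_of_dominant
    (hdom : ∀ i ≠ i₀, s i ≠ 0 → (s i₀).order < (s i).order) (h₀ : s i₀ ≠ 0) :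
    s.hsum.order = (s i₀).order := by
  refine order_eq_of_coeff_ne_zero ?_ fun g hg => ?_
  · rw [coeff_hsum_of_le_order s hdom le_rfl]
    exact mt coeff_order_eq_zero.1 h₀
  · rw [coeff_hsum_of_le_order s hdom hg.le]
    exact coeff_eq_zero_of_lt_order hg

theorem leadingCoeff_hsum_of_dominant
    (hdom : ∀ i ≠ i₀, s i ≠ 0 → (s i₀).order < (s i).order) (h₀ : s i₀ ≠ 0) :
    s.hsum.leadingCoeff = (s i₀).leadingCoeff := by
  rw [leadingCoeff_eq, leadingCoeff_eq, order_hsum_of_dominant s hdom h₀,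
    coeff_hsum_of_le_order s hdom le_rfl]

end SummableFamily

end Summable

end HahnSeries

open HahnSeries

theorem IsFractionRing.sec_zero_fst {A K : Type*} [CommRing A] [Field K] [Algebra A K]
    [IsFractionRing A K] : (IsLocalization.sec (nonZeroDivisors A) (0 : K)).1 = 0 :=
  IsFractionRing.injective A K (by rw [← IsLocalization.sec_spec, zero_mul, map_zero])

section Substitution

variable {n : ℕ}

theorem mvValEps_le {ε : Fin n → ℝ} {P : MvP n} {m : Fin n →₀ ℕ} (hm : m ∈ P.support) :
    mvValEps n ε P ≤ ∑ i, ε i * (m i : ℝ) := by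
  rw [mvValEps, dif_pos ⟨m, hm⟩]
  exact Finset.inf'_le _ hm

theorem exists_mem_support_eq_mvValEps (ε : Fin n → ℝ) {P : MvP n} (hP : P ≠ 0) :
    ∃ m ∈ P.support, ∑ i, ε i * (m i : ℝ) = mvValEps n ε P := by
  have h : P.support.Nonempty := MvPolynomial.support_nonempty.2 hP
  obtain ⟨m, hm, he⟩ := Finset.exists_mem_eq_inf' h fun m => ∑ i, ε i * (m i : ℝ)
  exact ⟨m, hm, by rw [mvValEps, dif_pos h, he]⟩

theorem coeff_polySubst (ε : Fin n → ℝ) (P : MvP n) (s : ℝ) :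
    (polySubst n ε P).coeff s = algebraMap (MvP n) (KK n)
      (∑ m ∈ P.support with ∑ i, ε i * (m i : ℝ) = s,
        MvPolynomial.monomial m (P.coeff m)) := by
  simp [polySubst, coeff_single, Finset.sum_filter, eq_comm, apply_ite]

theorem coeff_polySubst_mvValEps_ne_zero (ε : Fin n → ℝ) {P : MvP n} (hP : P ≠ 0) :
    (polySubst n ε P).coeff (mvValEps n ε P) ≠ 0 := by
  obtain ⟨m₀, hm₀, he⟩ := exists_mem_support_eq_mvValEps ε hP
  rw [coeff_polySubst, Ne, map_eq_zero_iff _ (IsFractionRing.injective _ _)]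
  intro h
  have h₀ := congrArg (MvPolynomial.coeff m₀) h
  simp only [MvPolynomial.coeff_sum, MvPolynomial.coeff_monomial, Finset.sum_ite_eq',
    Finset.mem_filter, MvPolynomial.coeff_zero] at h₀
  simp_all

theorem polySubst_ne_zero (ε : Fin n → ℝ) {P : MvP n} (hP : P ≠ 0) :
    polySubst n ε P ≠ 0 :=
  ne_zero_of_coeff_ne_zero (coeff_polySubst_mvValEps_ne_zero ε hP)

theorem order_polySubst (ε : Fin n → ℝ) {P : MvP n} (hP : P ≠ 0) :
    (polySubst n ε P).order = mvValEps n ε P := by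
  refine order_eq_of_coeff_ne_zero (coeff_polySubst_mvValEps_ne_zero ε hP) fun s hs => ?_
  rw [coeff_polySubst, Finset.filter_false_of_mem, Finset.sum_empty, map_zero]
  exact fun m hm he => (mvValEps_le hm).not_gt (he ▸ hs)

theorem polySubst_smul {c : ℝ} (hc : 0 < c) (u : Fin n → ℝ) (P : MvP n) :
    polySubst n (c • u) P = scaleDomain hc (polySubst n u P) := by
  simp only [polySubst, map_sum, scaleDomain_single, Pi.smul_apply, smul_eq_mul, mul_assoc,
    Finset.mul_sum]

theorem ratSubst_zero (ε : Fin n → ℝ) : ratSubst n ε 0 = 0 := by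
  rw [ratSubst, IsFractionRing.sec_zero_fst, polySubst, MvPolynomial.support_zero,
    Finset.sum_empty]
  exact zero_div (G₀ := HahnSeries ℝ (KK n)) _

theorem ratSubst_ne_zero (ε : Fin n → ℝ) {r : KK n} (hr : r ≠ 0) : ratSubst n ε r ≠ 0 :=
  div_ne_zero (G₀ := HahnSeries ℝ (KK n))
    (polySubst_ne_zero ε (IsLocalization.sec_fst_ne_zero hr))
    (polySubst_ne_zero ε (IsLocalization.sec_snd_ne_zero le_rfl r))

theorem order_ratSubst (ε : Fin n → ℝ) {r : KK n} (hr : r ≠ 0) :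
    (ratSubst n ε r).order = degEps n ε r := by
  have hnum := IsLocalization.sec_fst_ne_zero (M := nonZeroDivisors (MvP n)) hr
  have hden := IsLocalization.sec_snd_ne_zero (R := MvP n) (S := KK n) le_rfl r
  rw [ratSubst, order_div (polySubst_ne_zero ε hnum) (polySubst_ne_zero ε hden),
    order_polySubst ε hnum, order_polySubst ε hden, degEps]

theorem ratSubst_smul {c : ℝ} (hc : 0 < c) (u : Fin n → ℝ) (r : KK n) :
    ratSubst n (c • u) r = scaleDomain hc (ratSubst n u r) := by
  have hden := IsLocalization.sec_snd_ne_zero (R := MvP n) (S := KK n) le_rfl r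
  rw [ratSubst, ratSubst, div_eq_iff (G₀ := HahnSeries ℝ (KK n)) (polySubst_ne_zero _ hden),
    polySubst_smul hc, polySubst_smul hc, ← map_mul,
    div_mul_cancel₀ (G₀ := HahnSeries ℝ (KK n)) _ (polySubst_ne_zero _ hden)]

end Substitution

section DegreeBound

variable {n : ℕ}

theorem abs_weight_le (ε : Fin n → ℝ) (m : Fin n →₀ ℕ) :
    |∑ i, ε i * (m i : ℝ)| ≤ ‖ε‖ * (m.sum fun _ e => e : ℕ) := by
  calc |∑ i, ε i * (m i : ℝ)| ≤ ∑ i, ‖ε‖ * (m i : ℝ) :=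
        (Finset.abs_sum_le_sum_abs _ _).trans <| Finset.sum_le_sum fun i _ => by
          rw [abs_mul, Nat.abs_cast]
          exact mul_le_mul_of_nonneg_right (norm_le_pi_norm ε i) (Nat.cast_nonneg _)
    _ = ‖ε‖ * (m.sum fun _ e => e : ℕ) := by
        rw [← Finset.mul_sum, Finsupp.sum_fintype _ _ fun _ => rfl, Nat.cast_sum]

theorem abs_mvValEps_le (ε : Fin n → ℝ) (P : MvP n) :
    |mvValEps n ε P| ≤ ‖ε‖ * P.totalDegree := by
  rcases eq_or_ne P 0 with rfl | hP
  · simp [mvValEps]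
  obtain ⟨m, hm, he⟩ := exists_mem_support_eq_mvValEps ε hP
  rw [← he]
  exact (abs_weight_le ε m).trans (by gcongr; exact MvPolynomial.le_totalDegree hm)

theorem neg_mul_degK_le_degEps (u : Fin n → ℝ) (r : KK n) :
    -(‖u‖ * degK n r) ≤ degEps n u r := by
  rcases eq_or_ne u 0 with rfl | hu
  · simp [degEps, mvValEps]
  set num := (IsLocalization.sec (nonZeroDivisors (MvP n)) r).1
  set den := ((IsLocalization.sec (nonZeroDivisors (MvP n)) r).2 : MvP n)
  have hbdd :
      BddBelow {d : ℝ | ∃ ε : Fin n → ℝ, ε ≠ 0 ∧ d = degEps n ε r / ‖ε‖} := by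
    refine ⟨-(num.totalDegree + den.totalDegree : ℝ), ?_⟩
    rintro _ ⟨ε, hε, rfl⟩
    have h₁ := abs_le.1 (abs_mvValEps_le ε num)
    have h₂ := abs_le.1 (abs_mvValEps_le ε den)
    rw [le_div_iff₀ (norm_pos_iff.2 hε), degEps]
    nlinarith
  have h := csInf_le hbdd ⟨u, hu, rfl⟩
  rw [le_div_iff₀ (norm_pos_iff.2 hu)] at h
  rw [degK]
  linarith

end DegreeBound

section SeriesSubstitution

variable {n : ℕ}

/-- The term `a_t(p^w x) p^t` of `f(p^w x)`. -/
def termSubst (n : ℕ) (w : Fin n → ℝ) (f : HahnSeries ℝ (KK n)) (t : ℝ) :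
    HahnSeries ℝ (KK n) :=
  single t 1 * ratSubst n w (f.coeff t)

variable {w : Fin n → ℝ} {f : HahnSeries ℝ (KK n)}

theorem coeff_termSubst (t s : ℝ) :
    (termSubst n w f t).coeff s = (ratSubst n w (f.coeff t)).coeff (s - t) := by
  rw [termSubst, coeff_single_mul, one_mul]

theorem termSubst_ne_zero_iff {t : ℝ} : termSubst n w f t ≠ 0 ↔ t ∈ f.support := by
  rw [mem_support]
  refine ⟨fun h hf => h ?_, fun h => mul_ne_zero (single_ne_zero one_ne_zero) ?_⟩
  · rw [termSubst, hf, ratSubst_zero, mul_zero]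
  · exact ratSubst_ne_zero w h

theorem order_termSubst {t : ℝ} (ht : t ∈ f.support) :
    (termSubst n w f t).order = t + (ratSubst n w (f.coeff t)).order :=
  order_single_mul_of_isRegular isRegular_one (ratSubst_ne_zero w ht)

theorem leadingCoeff_termSubst (t : ℝ) :
    (termSubst n w f t).leadingCoeff = (ratSubst n w (f.coeff t)).leadingCoeff := by
  rw [termSubst, leadingCoeff_mul, leadingCoeff_of_single, one_mul]

theorem serSubst_eq {g : HahnSeries ℝ (KK n)}
    (hg : ∀ s, g.coeff s = ∑ᶠ t, (ratSubst n w (f.coeff t)).coeff (s - t)) :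
    serSubst n w f = g := by
  have hex : ∃ g : HahnSeries ℝ (KK n),
      ∀ s, g.coeff s = ∑ᶠ t, (ratSubst n w (f.coeff t)).coeff (s - t) := ⟨g, hg⟩
  rw [serSubst, dif_pos hex]
  ext s
  rw [hex.choose_spec, hg]

theorem serSubst_order_leadingCoeff_of_dominant (hf : f ≠ 0)
    (hfin : ∀ s, {t ∈ f.support | t + (ratSubst n w (f.coeff t)).order ≤ s}.Finite)
    (hdom : ∀ t ∈ f.support, t ≠ f.order →
      f.order + (ratSubst n w (f.coeff f.order)).order < t + (ratSubst n w (f.coeff t)).order) :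
    (serSubst n w f).order = f.order + (ratSubst n w (f.coeff f.order)).order ∧
      (serSubst n w f).leadingCoeff = (ratSubst n w (f.coeff f.order)).leadingCoeff := by
  have hv : f.order ∈ f.support := mt coeff_order_eq_zero.1 hf
  have hfam : ∀ s, {t | termSubst n w f t ≠ 0 ∧ (termSubst n w f t).order ≤ s}.Finite := by
    intro s
    refine (hfin s).subset fun t ⟨ht, hts⟩ => ?_
    rw [termSubst_ne_zero_iff] at ht
    exact ⟨ht, order_termSubst ht ▸ hts⟩
  set F := SummableFamily.ofFiniteOrderLE (termSubst n w f) hfam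
  have hser : serSubst n w f = F.hsum :=
    serSubst_eq fun s => by
      rw [SummableFamily.coeff_hsum]
      exact finsum_congr fun t => coeff_termSubst t s
  have hFdom : ∀ t ≠ f.order, F t ≠ 0 → (F f.order).order < (F t).order := by
    intro t htv ht
    rw [SummableFamily.ofFiniteOrderLE_apply, termSubst_ne_zero_iff] at ht
    simp only [F, SummableFamily.ofFiniteOrderLE_apply, order_termSubst ht, order_termSubst hv]
    exact hdom t ht htv
  have hF₀ : F f.order ≠ 0 := termSubst_ne_zero_iff.2 hv
  rw [hser, SummableFamily.order_hsum_of_dominant F hFdom hF₀,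
    SummableFamily.leadingCoeff_hsum_of_dominant F hFdom hF₀]
  exact ⟨order_termSubst hv, leadingCoeff_termSubst _⟩

end SeriesSubstitution

section Perturbation

open Filter Topology

theorem exists_pos_forall_add_le {S : Set ℝ} {v : ℝ} (hS : ∀ r, {t ∈ S | t ≤ r}.Finite)
    (hv : ∀ t ∈ S, v ≤ t) : ∃ δ > 0, ∀ t ∈ S, t ≠ v → v + δ ≤ t := by
  have hev : ∀ᶠ δ in 𝓝[>] (0 : ℝ),
      0 < δ ∧ δ ≤ 1 ∧ ∀ t ∈ {t ∈ S | t ≤ v + 1} \ {v}, δ ≤ t - v := by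
    refine eventually_mem_nhdsWithin.and
      (((eventually_le_nhds one_pos).filter_mono nhdsWithin_le_nhds).and ?_)
    refine ((hS (v + 1)).sdiff).eventually_all.2 fun t ⟨⟨ht, _⟩, htv⟩ =>
      (eventually_le_nhds ?_).filter_mono nhdsWithin_le_nhds
    exact sub_pos.2 ((hv t ht).lt_of_ne (Ne.symm htv))
  obtain ⟨δ, hδ, hδ₁, hδS⟩ := hev.exists
  refine ⟨δ, hδ, fun t ht htv => ?_⟩
  by_cases htle : t ≤ v + 1
  · linarith [hδS t ⟨⟨ht, htle⟩, htv⟩]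
  · linarith

theorem exists_pos_perturb_strictMin_and_finite {S : Set ℝ} {v K : ℝ} (d : ℝ → ℝ)
    (hS : ∀ r, {t ∈ S | t ≤ r}.Finite) (hv : ∀ t ∈ S, v ≤ t)
    (hd : ∀ t ∈ S, t ≠ v → -K * (t - v) ≤ d t) :
    ∃ ε₀ > 0, ∀ ε, 0 < ε → ε ≤ ε₀ →
      (∀ t ∈ S, t ≠ v → v + ε * d v < t + ε * d t) ∧
        ∀ s, {t ∈ S | t + ε * d t ≤ s}.Finite := by
  obtain ⟨δ, hδ, hgap⟩ := exists_pos_forall_add_le hS hv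
  set L := K + |d v| / δ
  have hL : ∀ t ∈ S, -L * (t - v) ≤ d t - d v := by
    intro t ht
    rcases eq_or_ne t v with rfl | htv
    · simp
    have hdv : |d v| ≤ |d v| / δ * (t - v) := by
      rw [div_mul_eq_mul_div, le_div_iff₀ hδ]
      nlinarith [abs_nonneg (d v), hgap t ht htv]
    nlinarith [hd t ht htv, le_abs_self (d v)]
  refine ⟨1 / (2 * (|L| + 1)), by positivity, fun ε hε hεle => ?_⟩
  have hεL : ε * L ≤ 1 / 2 :=
    calc ε * L ≤ ε * (|L| + 1) :=
          mul_le_mul_of_nonneg_left (by linarith [le_abs_self L]) hε.le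
      _ ≤ 1 / (2 * (|L| + 1)) * (|L| + 1) := mul_le_mul_of_nonneg_right hεle (by positivity)
      _ = 1 / 2 := by field_simp
  have hhalf : ∀ t ∈ S, (t - v) / 2 ≤ (t + ε * d t) - (v + ε * d v) := fun t ht => by
    have h₁ := mul_le_mul_of_nonneg_left (hL t ht) hε.le
    have h₂ := mul_le_mul_of_nonneg_right hεL (sub_nonneg.2 (hv t ht))
    linarith
  refine ⟨fun t ht htv => ?_, fun s => (hS (2 * s - v - 2 * ε * d v)).subset ?_⟩
  · linarith [hhalf t ht, (hv t ht).lt_of_ne (Ne.symm htv)]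
  · exact fun t ⟨ht, hts⟩ => ⟨ht, by linarith [hhalf t ht]⟩

end Perturbation

/-- (Iterated limit property.)  Let `f ∈ R(x)` (nonzero, with discrete bounded-below
exponent set and a degree-growth constant `C`).  Then for all sufficiently small `ε > 0`
and any `u : Fin n → ℝ`:
`lc(lc(f)(p^u x)) = lc(f(p^{εu} x))` and
`val(f) + ε · val(lc(f)(p^u x)) = val(f(p^{εu} x))`,
where `val` is the order of a Hahn series and `lc` its leading coefficient
(the coefficient at the order). -/
theorem iterated_limit (n : ℕ) (f : HahnSeries ℝ (KK n)) (hf : f ≠ 0)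
    (hFin : FiniteBelow n f) (C : ℝ)
    (hC : ∀ t ∈ f.support, t ≠ f.order → degK n (f.coeff t) ≤ C * (t - f.order))
    (u : Fin n → ℝ) :
    ∃ ε₀ : ℝ, 0 < ε₀ ∧ ∀ ε : ℝ, 0 < ε → ε ≤ ε₀ →
      ((ratSubst n u (f.coeff f.order)).coeff (ratSubst n u (f.coeff f.order)).order
          = (serSubst n (ε • u) f).coeff (serSubst n (ε • u) f).order)
      ∧ f.order + ε * (ratSubst n u (f.coeff f.order)).order
          = (serSubst n (ε • u) f).order := by
  set d : ℝ → ℝ := fun t => (ratSubst n u (f.coeff t)).order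
  have hd : ∀ t ∈ f.support, t ≠ f.order → -(‖u‖ * C) * (t - f.order) ≤ d t := by
    intro t ht htv
    have hdeg := mul_le_mul_of_nonneg_left (hC t ht htv) (norm_nonneg u)
    have hneg := neg_mul_degK_le_degEps u (f.coeff t)
    simp only [d, order_ratSubst u ht]
    linarith
  obtain ⟨ε₀, hε₀, hsmall⟩ := exists_pos_perturb_strictMin_and_finite d hFin
    (fun t ht => order_le_of_coeff_ne_zero ht) hd
  refine ⟨ε₀, hε₀, fun ε hε hεle => ?_⟩
  have hscale : ∀ t, (ratSubst n (ε • u) (f.coeff t)).order = ε * d t := fun t => by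
    rw [ratSubst_smul hε, order_scaleDomain]
  obtain ⟨hdom, hfin⟩ := hsmall ε hε hεle
  obtain ⟨hord, hlc⟩ := serSubst_order_leadingCoeff_of_dominant (w := ε • u) hf
    (by simpa only [hscale] using hfin) (by simpa only [hscale] using hdom)
  refine ⟨?_, by rw [hord, hscale]⟩
  rw [← leadingCoeff_eq (x := serSubst n (ε • u) f), hlc, ratSubst_smul hε,
    leadingCoeff_scaleDomain, leadingCoeff_eq]
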